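/- arXiv:1809.03372 — 8 statements merged into one kernel-verified Lean document; each statement's English description precedes it below -/
import Mathlib

section
/- Assume k·n_{i−1} ≠ e_{i−1} for every i with 1 ≤ i ≤ t and every k in A_i. Let Ω⁺(f_t) and Ω⁻(f_t) denote the sets of positive and negative real roots of the G_t-likelihood polynomial f_t. If Ω⁺(f_t) and Ω⁻(f_t) are both nonempty, and the total number of factor indices (i, k) (counted with multiplicity in A_i) for which k·n_{i−1} < e_{i−1} is even, then, setting a = max Ω⁻(f_t) and b = min Ω⁺(f_t), there exists a real number α with a < α < b such that α is a local maximum point of the function x ↦ f_t(x). -/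
/-!
Every linear factor of `f_t` takes the value `1 / n_{i-1} > 0` at `x = 0`, so `f_t(0) > 0`,
while `f_t` vanishes at `a < 0 < b`. Hence the maximum of `f_t` on `[a, b]` is attained in the
open interval `(a, b)`, where it is a local maximum.
-/

open Polynomial Set

theorem exists_isLocalMax_Ioo_of_lt {X Y : Type*}
    [ConditionallyCompleteLinearOrder X] [TopologicalSpace X] [OrderTopology X]
    [LinearOrder Y] [TopologicalSpace Y] [OrderClosedTopology Y]
    {f : X → Y} {a b c : X} (hfc : ContinuousOn f (Icc a b)) (hc : c ∈ Icc a b)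
    (ha : f a < f c) (hb : f b < f c) :
    ∃ α ∈ Ioo a b, IsLocalMax f α := by
  obtain ⟨α, hα, hmax⟩ := isCompact_Icc.exists_isMaxOn ⟨c, hc⟩ hfc
  have hαa : a ≠ α := fun h => (ha.trans_le (hmax hc)).ne (by rw [h])
  have hαb : α ≠ b := fun h => (hb.trans_le (hmax hc)).ne (by rw [h])
  have hαI : α ∈ Ioo a b := ⟨hα.1.lt_of_ne hαa, hα.2.lt_of_ne hαb⟩
  exact ⟨α, hαI, hmax.isLocalMax (Icc_mem_nhds hαI.1 hαI.2)⟩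

theorem eval_zero_prod_linear_pos {ι κ : Type*} (s : Finset ι) (A : ι → Multiset κ)
    (slope : ι → κ → ℝ) (r : ι → ℝ) (hr : ∀ j ∈ s, 0 < r j) :
    0 < (∏ j ∈ s, ((A j).map fun l => C (slope j l) * X + C (r j)).prod).eval 0 := by
  rw [eval_prod]
  refine Finset.prod_pos fun j hj => ?_
  rw [eval_multiset_prod, Multiset.map_map]
  refine Multiset.prod_pos fun y hy => ?_
  obtain ⟨l, -, rfl⟩ := Multiset.mem_map.1 hy
  simpa using hr j hj

theorem likelihood_local_max_general
    (t : ℕ)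
    (A : ℕ → Multiset ℕ)
    (n e : ℕ → ℕ)
    (hn : ∀ i ∈ Finset.Icc 1 t, 0 < n (i - 1))
    (f : Polynomial ℝ)
    (hf : f = ∏ j ∈ Finset.Icc 1 t,
        ((A j).map (fun l =>
          Polynomial.C ((l : ℝ) / (e (j - 1) : ℝ) - 1 / (n (j - 1) : ℝ)) * Polynomial.X
            + Polynomial.C (1 / (n (j - 1) : ℝ)))).prod)
    (a b : ℝ)
    (ha : IsGreatest {x : ℝ | x < 0 ∧ f.IsRoot x} a)
    (hb : IsLeast {x : ℝ | 0 < x ∧ f.IsRoot x} b) :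
    ∃ α : ℝ, a < α ∧ α < b ∧ IsLocalMax (fun x : ℝ => f.eval x) α := by
  have hf0 : 0 < f.eval 0 := hf ▸ eval_zero_prod_linear_pos _ _ _ _
    fun j hj => one_div_pos.2 (Nat.cast_pos.2 (hn j hj))
  have hfa : f.eval a < f.eval 0 := by rwa [ha.1.2.eq_zero]
  have hfb : f.eval b < f.eval 0 := by rwa [hb.1.2.eq_zero]
  obtain ⟨α, hα, hmax⟩ := exists_isLocalMax_Ioo_of_lt f.continuous.continuousOn
    ⟨ha.1.1.le, hb.1.1.le⟩ hfa hfb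
  exact ⟨α, hα.1, hα.2, hmax⟩

/-- Assume `k·n_{i−1} ≠ e_{i−1}` for all factors. If the sets of
positive and negative real roots of `f_t` are nonempty and the number of factor
indices `(i,k)` (with multiplicity) with `k·n_{i−1} < e_{i−1}` is even, then,
with `a = max Ω⁻(f_t)` and `b = min Ω⁺(f_t)`, there is `α ∈ (a,b)` which is a
local maximum point of `x ↦ f_t(x)`. -/
theorem likelihood_local_max
    (t m : ℕ) (ht : 1 ≤ t) (hm : 1 ≤ m)
    (A : ℕ → Multiset ℕ)
    (hAcard : ∀ i ∈ Finset.Icc 1 t, (A i).card = m)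
    (hApos : ∀ i ∈ Finset.Icc 1 t, ∀ k ∈ A i, 0 < k)
    (n e : ℕ → ℕ)
    (hn : ∀ i ∈ Finset.Icc 1 t, 0 < n (i - 1))
    (he : ∀ i ∈ Finset.Icc 1 t, 0 < e (i - 1))
    (hne : ∀ i ∈ Finset.Icc 1 t, ∀ k ∈ A i, k * n (i - 1) ≠ e (i - 1))
    (f : Polynomial ℝ)
    (hf : f = ∏ j ∈ Finset.Icc 1 t,
        ((A j).map (fun l =>
          Polynomial.C ((l : ℝ) / (e (j - 1) : ℝ) - 1 / (n (j - 1) : ℝ)) * Polynomial.X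
            + Polynomial.C (1 / (n (j - 1) : ℝ)))).prod)
    (hpos : {x : ℝ | 0 < x ∧ f.IsRoot x}.Nonempty)
    (hneg : {x : ℝ | x < 0 ∧ f.IsRoot x}.Nonempty)
    (heven : Even (∑ i ∈ Finset.Icc 1 t,
        ((A i).filter (fun k => k * n (i - 1) < e (i - 1))).card))
    (a b : ℝ)
    (ha : IsGreatest {x : ℝ | x < 0 ∧ f.IsRoot x} a)
    (hb : IsLeast {x : ℝ | 0 < x ∧ f.IsRoot x} b) :
    ∃ α : ℝ, a < α ∧ α < b ∧ IsLocalMax (fun x : ℝ => f.eval x) α :=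
  likelihood_local_max_general t A n e hn f hf a b ha hb
end

section
/- Let (P_t)_{t ∈ ℕ} be a real sequence satisfying, for every t ≥ 1, P_t = (1/n_t)·( n_{t−1} − m·m̂·α·n_{t−1}/e_{t−1} − m·(1 − α) )·P_{t−1} + 1/n_t. Then P_t converges as t → ∞, and lim_{t→∞} P_t = (m + m̂)/(m + m̂ + m² + m·m̂ − m²·α). -/
open Filter Topology Set

/-!
Write `N_t = n₀ + t`, `E_t = e₀ + (m + m̂) t` and `L` for the claimed limit. The recurrence reads
`N_{t+1} P_{t+1} = b_t P_t + 1` with `b_t = N_t - m m̂ α N_t / E_t - m (1 - α)`, and `L` is the fixed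
point of the limiting recurrence, so `N_{t+1} (P_{t+1} - L) = b_t (P_t - L) + δ_t` with
`δ_t = O(1 / E_t) → 0`. As `0 ≤ b_t ≤ N_t` for large `t`, the quantity `N_t |P_t - L|` grows by at
most `|δ_t|` per step, hence sublinearly, and so `|P_t - L| → 0`.
-/

theorem eventually_le_mul_of_le_add {y g : ℕ → ℝ} (hg : Tendsto g atTop (𝓝 0))
    (hy : ∀ᶠ t in atTop, y (t + 1) ≤ y t + g t) {ε : ℝ} (hε : 0 < ε) :
    ∀ᶠ t : ℕ in atTop, y t ≤ ε * t := by
  obtain ⟨T, hT⟩ :=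
    eventually_atTop.1 (hy.and (hg.eventually (gt_mem_nhds (half_pos hε))))
  have hlin : ∀ t ≥ T, y t ≤ y T + ε / 2 * (t - T) := by
    intro t ht
    induction t, ht using Nat.le_induction with
    | base => simp
    | succ t ht ih =>
      have := hT t ht
      push_cast
      linarith
  filter_upwards [eventually_ge_atTop T,
    tendsto_natCast_atTop_atTop.eventually_ge_atTop (2 * |y T| / ε)] with t ht hlarge
  have hyT : 2 * y T ≤ ε * t :=
    (mul_le_mul_of_nonneg_left (le_abs_self _) zero_le_two).trans ((div_le_iff₀' hε).1 hlarge)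
  have hT0 : (0 : ℝ) ≤ ε / 2 * T := by positivity
  linarith [hlin t ht]

theorem tendsto_zero_of_mul_succ_le {x w g : ℕ → ℝ} (hx : ∀ t, 0 ≤ x t)
    (hw : ∀ t : ℕ, (t : ℝ) ≤ w t) (hg : Tendsto g atTop (𝓝 0))
    (hstep : ∀ᶠ t in atTop, w (t + 1) * x (t + 1) ≤ w t * x t + g t) :
    Tendsto x atTop (𝓝 0) := by
  refine tendsto_order.2 ⟨fun a ha => Eventually.of_forall fun t => ha.trans_le (hx t),
    fun a ha => ?_⟩
  filter_upwards [eventually_le_mul_of_le_add (y := fun t => w t * x t) hg hstep (half_pos ha),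
    eventually_ge_atTop 1] with t ht ht1
  have ht1 : (1 : ℝ) ≤ t := by exact_mod_cast ht1
  have hwx : w t * x t ≤ w t * (a / 2) := by nlinarith [hw t]
  have := le_of_mul_le_mul_left hwx (by linarith [hw t])
  linarith

namespace BaseIndegree

variable (m mh α : ℝ)

noncomputable def limit : ℝ := (m + mh) / (m + mh + m ^ 2 + m * mh - m ^ 2 * α)

/-- The paper's `n_{t-1} - m m̂ α n_{t-1} / e_{t-1} - m (1 - α)`, with `N = n_{t-1}`, `E = e_{t-1}`. -/
noncomputable def retention (N E : ℝ) : ℝ := N - m * mh * α * N / E - m * (1 - α)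

variable {m mh α}

theorem succ_mul_sub_limit (hsum : m + mh ≠ 0) (hden : m + mh + m ^ 2 + m * mh - m ^ 2 * α ≠ 0)
    {N E : ℝ} (hN : N + 1 ≠ 0) (hE : E ≠ 0) (p : ℝ) :
    (N + 1) * (1 / (N + 1) * retention m mh α N E * p + 1 / (N + 1) - limit m mh α) =
      retention m mh α N E * (p - limit m mh α) +
        limit m mh α * (m * mh * α) * (E - (m + mh) * N) / ((m + mh) * E) := by
  unfold limit retention
  field_simp
  ring

theorem retention_mem_Icc (hm : 0 ≤ m) (hmh : 0 ≤ mh) (hα : α ∈ Icc 0 1) {N E : ℝ}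
    (hN : 2 * (m * (1 - α)) ≤ N) (hE : 2 * (m * mh * α) ≤ E) (hE0 : 0 < E) :
    retention m mh α N E ∈ Icc 0 N := by
  obtain ⟨hα0, hα1⟩ := hα
  have hc : 0 ≤ m * (1 - α) := mul_nonneg hm (by linarith)
  have hk : 0 ≤ m * mh * α := by positivity
  have hfrac : m * mh * α * N / E ≤ N / 2 := by
    rw [div_le_div_iff₀ hE0 two_pos]
    nlinarith
  have hfrac0 : 0 ≤ m * mh * α * N / E := div_nonneg (mul_nonneg hk (by linarith)) hE0.le
  unfold retention
  constructor <;> linarith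

theorem succ_mul_abs_sub_limit_le (hsum : m + mh ≠ 0)
    (hden : m + mh + m ^ 2 + m * mh - m ^ 2 * α ≠ 0) {N E : ℝ}
    (hb : retention m mh α N E ∈ Icc 0 N) (hE : E ≠ 0) (p : ℝ) :
    (N + 1) * |1 / (N + 1) * retention m mh α N E * p + 1 / (N + 1) - limit m mh α| ≤
      N * |p - limit m mh α| +
        |limit m mh α * (m * mh * α) * (E - (m + mh) * N) / ((m + mh) * E)| := by
  have hN : 0 < N + 1 := by linarith [hb.1.trans hb.2]
  rw [← abs_of_pos hN, ← abs_mul, abs_of_pos hN, succ_mul_sub_limit hsum hden hN.ne' hE]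
  refine (abs_add_le _ _).trans (add_le_add_left ?_ _)
  rw [abs_mul, abs_of_nonneg hb.1]
  exact mul_le_mul_of_nonneg_right hb.2 (abs_nonneg _)

end BaseIndegree

open BaseIndegree in
theorem base_indegree_fraction_limit_general
    (m mh : ℕ) (hm : 1 ≤ m)
    (α : ℝ) (hα : α ∈ Set.Icc (0 : ℝ) 1)
    (n0 e0 : ℕ)
    (P : ℕ → ℝ)
    (hrec : ∀ t : ℕ, 1 ≤ t →
      P t = (1 / ((n0 + t : ℕ) : ℝ)) *
          (((n0 + (t - 1) : ℕ) : ℝ)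
            - (m : ℝ) * (mh : ℝ) * α * ((n0 + (t - 1) : ℕ) : ℝ)
                / ((e0 + (m + mh) * (t - 1) : ℕ) : ℝ)
            - (m : ℝ) * (1 - α)) * P (t - 1)
        + 1 / ((n0 + t : ℕ) : ℝ)) :
    Tendsto P atTop
      (nhds (((m : ℝ) + (mh : ℝ)) /
        ((m : ℝ) + (mh : ℝ) + (m : ℝ) ^ 2 + (m : ℝ) * (mh : ℝ) - (m : ℝ) ^ 2 * α))) := by
  have hsum : (0 : ℝ) < m + mh := by positivity
  have hden : (0 : ℝ) < m + mh + m ^ 2 + m * mh - m ^ 2 * α := by nlinarith [hα.2]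
  set N : ℕ → ℝ := fun t => n0 + t
  set E : ℕ → ℝ := fun t => e0 + (m + mh) * t
  have hN : Tendsto N atTop atTop := tendsto_atTop_add_const_left _ _ tendsto_natCast_atTop_atTop
  have hE : Tendsto E atTop atTop :=
    tendsto_atTop_add_const_left _ _ (tendsto_natCast_atTop_atTop.const_mul_atTop hsum)
  have hstep (t : ℕ) :
      P (t + 1) = 1 / (N t + 1) * retention m mh α (N t) (E t) * P t + 1 / (N t + 1) := by
    simpa [add_assoc, N, E, retention] using hrec (t + 1) (by omega)
  have hdefect (t : ℕ) : E t - (m + mh) * N t = e0 - (m + mh) * n0 := by simp only [N, E]; ring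
  show Tendsto P atTop (𝓝 (limit m mh α))
  refine tendsto_iff_norm_sub_tendsto_zero.2 (tendsto_zero_of_mul_succ_le (w := N)
    (g := fun t => |limit m mh α * (m * mh * α) * (E t - (m + mh) * N t) / ((m + mh) * E t)|)
    (fun t => norm_nonneg _) (fun t => by simp [N]) ?_ ?_)
  · simp_rw [hdefect]
    simpa using (tendsto_const_nhds.div_atTop (hE.const_mul_atTop hsum)).abs
  · filter_upwards [hE.eventually_gt_atTop 0, hE.eventually_ge_atTop (2 * (m * mh * α)),
      hN.eventually_ge_atTop (2 * (m * (1 - α)))] with t hE0 hEk hNc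
    have hb := retention_mem_Icc (by positivity) (by positivity) hα hNc hEk hE0
    have hN1 : N (t + 1) = N t + 1 := by simp only [N]; push_cast; ring
    simpa only [Real.norm_eq_abs, hN1, hstep t] using
      succ_mul_abs_sub_limit_le hsum.ne' hden.ne' hb hE0.ne' (P t)

/-- With `n_t = n_0 + t` and `e_t = e_0 + (m + m̂)·t`, a real
sequence satisfying
`P_t = (1/n_t)·(n_{t−1} − m·m̂·α·n_{t−1}/e_{t−1} − m·(1 − α))·P_{t−1} + 1/n_t`
for every `t ≥ 1` converges to `(m + m̂)/(m + m̂ + m² + m·m̂ − m²·α)`. -/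
theorem base_indegree_fraction_limit
    (m mh : ℕ) (hm : 1 ≤ m)
    (α : ℝ) (hα : α ∈ Set.Icc (0 : ℝ) 1)
    (n0 e0 : ℕ) (hn0 : 1 ≤ n0) (he0 : 1 ≤ e0)
    (P : ℕ → ℝ)
    (hrec : ∀ t : ℕ, 1 ≤ t →
      P t = (1 / ((n0 + t : ℕ) : ℝ)) *
          (((n0 + (t - 1) : ℕ) : ℝ)
            - (m : ℝ) * (mh : ℝ) * α * ((n0 + (t - 1) : ℕ) : ℝ)
                / ((e0 + (m + mh) * (t - 1) : ℕ) : ℝ)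
            - (m : ℝ) * (1 - α)) * P (t - 1)
        + 1 / ((n0 + t : ℕ) : ℝ)) :
    Tendsto P atTop
      (nhds (((m : ℝ) + (mh : ℝ)) /
        ((m : ℝ) + (mh : ℝ) + (m : ℝ) ^ 2 + (m : ℝ) * (mh : ℝ) - (m : ℝ) ^ 2 * α))) :=
  base_indegree_fraction_limit_general m mh hm α hα n0 e0 P hrec
end

section
/- Fix an integer k ≥ m̂ + 1. Let (Q_t)_{t ∈ ℕ} be a real sequence converging to a limit L, and let (R_t)_{t ∈ ℕ} satisfy, for every t ≥ 1, n_t·R_t = ( n_{t−1} − m·α·k·n_{t−1}/e_{t−1} − m·(1 − α) )·R_{t−1} + ( m·α·(k − 1)·n_{t−1}/e_{t−1} + m·(1 − α) )·Q_{t−1}. Then R_t converges as t → ∞, and lim_{t→∞} R_t = ( m·α·(k − 1)/(m + m̂) + m·(1 − α) ) / ( 1 + m·α·k/(m + m̂) + m·(1 − α) ) · L. -/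
/-!
With `r` the claimed limit, `D_t = R_t - r` satisfies
`n_{t+1} D_{t+1} = (n_t - γ_t) D_t + h_t`, where `γ_t → γ ≥ 0` (because `n_t / e_t → 1 / (m + m̂)`)
and `h_t → 0` (because `r` is the fixed point `δ L = (1 + γ) r`). Hence `|D|` contracts by the
factor `1 - c / n_{t+1}` for some `c > 0`, up to a vanishing error; since `∑ 1 / n_t` diverges,
the product of these factors tends to zero and so does `D`.
-/

open Filter Topology Finset

theorem le_exp_neg_sum_mul_of_le_one_sub_mul {u ε : ℕ → ℝ} (hu : ∀ s, 0 ≤ u s)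
    (hstep : ∀ s, u (s + 1) ≤ (1 - ε s) * u s) (t : ℕ) :
    u t ≤ Real.exp (-∑ s ∈ range t, ε s) * u 0 := by
  induction t with
  | zero => simp
  | succ t ih =>
    calc u (t + 1) ≤ (1 - ε t) * u t := hstep t
      _ ≤ Real.exp (-ε t) * u t := by
        gcongr
        · exact hu t
        · linarith [Real.add_one_le_exp (-ε t)]
      _ ≤ Real.exp (-ε t) * (Real.exp (-∑ s ∈ range t, ε s) * u 0) := by gcongr
      _ = Real.exp (-∑ s ∈ range (t + 1), ε s) * u 0 := by
        rw [sum_range_succ, ← mul_assoc, ← Real.exp_add]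
        ring_nf

theorem tendsto_zero_of_le_one_sub_mul {u ε : ℕ → ℝ} (hu : ∀ s, 0 ≤ u s)
    (hε : ∀ᶠ s in atTop, 0 ≤ ε s) (hstep : ∀ᶠ s in atTop, u (s + 1) ≤ (1 - ε s) * u s)
    (hdiv : ¬ Summable ε) : Tendsto u atTop (𝓝 0) := by
  obtain ⟨T, hT⟩ := eventually_atTop.mp (hε.and hstep)
  rw [← tendsto_add_atTop_iff_nat T]
  have hsum : Tendsto (fun t => ∑ s ∈ range t, ε (s + T)) atTop atTop :=
    (not_summable_iff_tendsto_nat_atTop_of_nonneg fun s => (hT (s + T) (by omega)).1).mp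
      (mt (summable_nat_add_iff T).mp hdiv)
  have hexp : Tendsto (fun t => Real.exp (-∑ s ∈ range t, ε (s + T)) * u (0 + T)) atTop (𝓝 0) := by
    simpa using (Real.tendsto_exp_atBot.comp (tendsto_neg_atTop_atBot.comp hsum)).mul_const _
  refine squeeze_zero (fun t => hu _) (fun t => ?_) hexp
  refine le_exp_neg_sum_mul_of_le_one_sub_mul (u := fun s => u (s + T)) (fun s => hu _)
    (fun s => ?_) t
  simpa [add_right_comm] using (hT (s + T) (by omega)).2

theorem tendsto_zero_of_le_one_sub_mul_add_mul {x ε g : ℕ → ℝ} (hx : ∀ s, 0 ≤ x s)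
    (hε : ∀ᶠ s in atTop, 0 ≤ ε s ∧ ε s ≤ 1)
    (hstep : ∀ᶠ s in atTop, x (s + 1) ≤ (1 - ε s) * x s + ε s * g s)
    (hg : Tendsto g atTop (𝓝 0)) (hdiv : ¬ Summable ε) : Tendsto x atTop (𝓝 0) := by
  refine tendsto_order.2 ⟨fun η hη => .of_forall fun s => hη.trans_le (hx s), fun η hη => ?_⟩
  set u : ℕ → ℝ := fun s => max (x s - η / 2) 0
  have hu : Tendsto u atTop (𝓝 0) := by
    refine tendsto_zero_of_le_one_sub_mul (fun s => le_max_right _ _) (hε.mono fun s h => h.1)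
      ?_ hdiv
    filter_upwards [hε, hstep, hg.eventually_le_const (half_pos hη)] with s ⟨h0, h1⟩ hs hgs
    -- below the threshold `η / 2` the forcing term `g` can only pull `x` down
    have : x (s + 1) - η / 2 ≤ (1 - ε s) * (x s - η / 2) := by nlinarith
    exact max_le (this.trans (mul_le_mul_of_nonneg_left (le_max_left _ _) (by linarith)))
      (mul_nonneg (by linarith) (le_max_right _ _))
  filter_upwards [hu.eventually_lt_const (half_pos hη)] with s hs
  linarith [le_max_left (x s - η / 2) 0]

theorem not_summable_div_add_nat_add_one {c : ℝ} (hc : c ≠ 0) (N : ℝ) :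
    ¬ Summable fun s : ℕ => c / (N + s + 1) := by
  intro h
  have : Summable fun s : ℕ => 1 / |(s : ℝ) + (N + 1)| ^ (1 : ℝ) := by
    refine (h.mul_left c⁻¹).congr_atTop ?_
    filter_upwards [eventually_gt_atTop ⌈-(N + 1)⌉₊] with s hs
    have : 0 < (s : ℝ) + (N + 1) := by linarith [Nat.lt_of_ceil_lt hs]
    rw [Real.rpow_one, abs_of_pos this, ← mul_div_assoc, inv_mul_cancel₀ hc]
    ring
  exact lt_irrefl _ ((Real.summable_one_div_nat_add_rpow _ _).mp this)

theorem tendsto_zero_of_add_nat_add_one_mul_eq {N γ : ℝ} {a h x : ℕ → ℝ} (hγ : -1 < γ)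
    (ha : Tendsto a atTop (𝓝 γ)) (hh : Tendsto h atTop (𝓝 0))
    (hrec : ∀ᶠ s : ℕ in atTop, (N + s + 1) * x (s + 1) = (N + s - a s) * x s + h s) :
    Tendsto x atTop (𝓝 0) := by
  -- contraction rate `c / (N + s + 1)` for any `c < 1 + γ`
  obtain ⟨c, hc, hcγ⟩ : ∃ c : ℝ, 0 < c ∧ c - 1 < γ := ⟨(1 + γ) / 2, by linarith, by linarith⟩
  have hlarge : ∀ K : ℝ, ∀ᶠ s : ℕ in atTop, K ≤ N + s := fun K =>
    (tendsto_natCast_atTop_atTop.eventually_ge_atTop (K - N)).mono fun s hs => by linarith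
  rw [tendsto_zero_iff_abs_tendsto_zero]
  refine tendsto_zero_of_le_one_sub_mul_add_mul (x := fun s => |x s|)
    (ε := fun s => c / (N + s + 1)) (g := fun s => |h s| / c) (fun s => abs_nonneg _) ?_ ?_
    (by simpa using hh.abs.div_const c) (not_summable_div_add_nat_add_one hc.ne' N)
  · filter_upwards [hlarge c] with s hs
    exact ⟨div_nonneg hc.le (by linarith), (div_le_one (by linarith)).mpr (by linarith)⟩
  · filter_upwards [hrec, hlarge (γ + 1), hlarge c, ha.eventually_const_lt hcγ,
      ha.eventually_lt_const (lt_add_one γ)] with s hs hsγ hsc hac hag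
    have hn : 0 < N + s + 1 := by linarith
    have key : (N + s + 1) * |x (s + 1)| ≤ (N + s + 1 - c) * |x s| + |h s| :=
      calc (N + s + 1) * |x (s + 1)| = |(N + s - a s) * x s + h s| := by
            rw [← hs, abs_mul, abs_of_pos hn]
        _ ≤ |N + s - a s| * |x s| + |h s| := by rw [← abs_mul]; exact abs_add_le _ _
        _ ≤ (N + s + 1 - c) * |x s| + |h s| := by
            gcongr
            rw [abs_of_nonneg (by linarith)]
            linarith
    have hrhs : (1 - c / (N + s + 1)) * |x s| + c / (N + s + 1) * (|h s| / c) =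
        ((N + s + 1 - c) * |x s| + |h s|) / (N + s + 1) := by
      field_simp
    rw [hrhs, le_div_iff₀ hn, mul_comm]
    exact key

theorem tendsto_of_add_nat_add_one_mul_eq {N γ δ L : ℝ} {a b Q R : ℕ → ℝ} (hγ : -1 < γ)
    (ha : Tendsto a atTop (𝓝 γ)) (hb : Tendsto b atTop (𝓝 δ)) (hQ : Tendsto Q atTop (𝓝 L))
    (hrec : ∀ᶠ s : ℕ in atTop, (N + s + 1) * R (s + 1) = (N + s - a s) * R s + b s * Q s) :
    Tendsto R atTop (𝓝 (δ / (1 + γ) * L)) := by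
  set r := δ / (1 + γ) * L with hr
  have hfix : δ * L - (1 + γ) * r = 0 := by
    have : 1 + γ ≠ 0 := by linarith
    rw [hr]
    field_simp
    ring
  have hdev : Tendsto (fun s => R s - r) atTop (𝓝 0) := by
    refine tendsto_zero_of_add_nat_add_one_mul_eq (N := N)
      (h := fun s => b s * Q s - (1 + a s) * r) hγ ha
      (hfix ▸ (hb.mul hQ).sub ((ha.const_add 1).mul_const r)) ?_
    filter_upwards [hrec] with s hs
    linear_combination hs
  simpa using hdev.add_const r

theorem tendsto_add_nat_div_add_mul_nat (a b : ℝ) {M : ℝ} (hM : M ≠ 0) :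
    Tendsto (fun s : ℕ => (a + s) / (b + M * s)) atTop (𝓝 M⁻¹) := by
  have hlim : Tendsto (fun s : ℕ => (a / s + 1) / (b / s + M)) atTop (𝓝 ((0 + 1) / (0 + M))) :=
    ((tendsto_const_div_atTop_nhds_zero_nat a).add_const 1).div
      ((tendsto_const_div_atTop_nhds_zero_nat b).add_const M) (by simpa using hM)
  rw [zero_add, zero_add, one_div] at hlim
  refine hlim.congr' ?_
  filter_upwards [eventually_ne_atTop 0] with s hs
  have hs' : (s : ℝ) ≠ 0 := Nat.cast_ne_zero.mpr hs
  rw [← div_div_div_cancel_right₀ hs' (a + s)]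
  congr 1 <;> field_simp

theorem indegree_fraction_limit_step_general
    (m mh : ℕ) (hm : 1 ≤ m)
    (α : ℝ) (hα : α ∈ Set.Icc (0 : ℝ) 1)
    (n0 e0 : ℕ)
    (k : ℕ)
    (Q R : ℕ → ℝ) (L : ℝ)
    (hQ : Tendsto Q atTop (nhds L))
    (hrec : ∀ t : ℕ, 1 ≤ t →
      ((n0 + t : ℕ) : ℝ) * R t =
        (((n0 + (t - 1) : ℕ) : ℝ)
            - (m : ℝ) * α * (k : ℝ) * ((n0 + (t - 1) : ℕ) : ℝ)
                / ((e0 + (m + mh) * (t - 1) : ℕ) : ℝ)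
            - (m : ℝ) * (1 - α)) * R (t - 1)
        + ((m : ℝ) * α * ((k : ℝ) - 1) * ((n0 + (t - 1) : ℕ) : ℝ)
              / ((e0 + (m + mh) * (t - 1) : ℕ) : ℝ)
            + (m : ℝ) * (1 - α)) * Q (t - 1)) :
    Tendsto R atTop
      (nhds ((((m : ℝ) * α * ((k : ℝ) - 1) / ((m : ℝ) + (mh : ℝ)) + (m : ℝ) * (1 - α)) /
          (1 + (m : ℝ) * α * (k : ℝ) / ((m : ℝ) + (mh : ℝ)) + (m : ℝ) * (1 - α))) * L)) := by
  obtain ⟨hα0, hα1⟩ := hα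
  have hM : (m : ℝ) + mh ≠ 0 := by norm_cast; omega
  have hratio : Tendsto (fun s : ℕ => ((n0 + s : ℕ) : ℝ) / ((e0 + (m + mh) * s : ℕ) : ℝ)) atTop
      (𝓝 ((m : ℝ) + mh)⁻¹) := by
    simpa using tendsto_add_nat_div_add_mul_nat n0 e0 hM
  have hγ : -1 < (m : ℝ) * α * k / (m + mh) + m * (1 - α) := by
    have : 0 ≤ (m : ℝ) * (1 - α) := mul_nonneg (by positivity) (by linarith)
    have : 0 ≤ (m : ℝ) * α * k / (m + mh) := by positivity
    linarith
  have hlim := tendsto_of_add_nat_add_one_mul_eq (N := n0) (R := R) hγ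
    ((hratio.const_mul ((m : ℝ) * α * k)).add_const ((m : ℝ) * (1 - α)))
    ((hratio.const_mul ((m : ℝ) * α * (k - 1))).add_const ((m : ℝ) * (1 - α))) hQ
    (.of_forall fun s => by
      have := hrec (s + 1) (by omega)
      simp only [Nat.add_sub_cancel] at this
      push_cast at this ⊢
      linear_combination this)
  convert hlim using 3; ring

/-- Fix `k ≥ m̂ + 1`. If `Q_t → L` and
`n_t·R_t = (n_{t−1} − m·α·k·n_{t−1}/e_{t−1} − m·(1 − α))·R_{t−1}
           + (m·α·(k − 1)·n_{t−1}/e_{t−1} + m·(1 − α))·Q_{t−1}`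
for all `t ≥ 1`, then
`R_t → (m·α·(k − 1)/(m + m̂) + m·(1 − α)) / (1 + m·α·k/(m + m̂) + m·(1 − α)) · L`. -/
theorem indegree_fraction_limit_step
    (m mh : ℕ) (hm : 1 ≤ m)
    (α : ℝ) (hα : α ∈ Set.Icc (0 : ℝ) 1)
    (n0 e0 : ℕ) (hn0 : 1 ≤ n0) (he0 : 1 ≤ e0)
    (k : ℕ) (hk : mh + 1 ≤ k)
    (Q R : ℕ → ℝ) (L : ℝ)
    (hQ : Tendsto Q atTop (nhds L))
    (hrec : ∀ t : ℕ, 1 ≤ t →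
      ((n0 + t : ℕ) : ℝ) * R t =
        (((n0 + (t - 1) : ℕ) : ℝ)
            - (m : ℝ) * α * (k : ℝ) * ((n0 + (t - 1) : ℕ) : ℝ)
                / ((e0 + (m + mh) * (t - 1) : ℕ) : ℝ)
            - (m : ℝ) * (1 - α)) * R (t - 1)
        + ((m : ℝ) * α * ((k : ℝ) - 1) * ((n0 + (t - 1) : ℕ) : ℝ)
              / ((e0 + (m + mh) * (t - 1) : ℕ) : ℝ)
            + (m : ℝ) * (1 - α)) * Q (t - 1)) :
    Tendsto R atTop
      (nhds ((((m : ℝ) * α * ((k : ℝ) - 1) / ((m : ℝ) + (mh : ℝ)) + (m : ℝ) * (1 - α)) /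
          (1 + (m : ℝ) * α * (k : ℝ) / ((m : ℝ) + (mh : ℝ)) + (m : ℝ) * (1 - α))) * L)) :=
  indegree_fraction_limit_step_general m mh hm α hα n0 e0 k Q R L hQ hrec
end

section
/- Let P : ℕ → ℕ → ℝ be such that for every t ≥ 1, n_t·P_t(m̂) = ( n_{t−1} − m·m̂·α·n_{t−1}/e_{t−1} − m·(1 − α) )·P_{t−1}(m̂) + 1, and for every integer k > m̂ and every t ≥ 1, n_t·P_t(k) = ( n_{t−1} − m·α·k·n_{t−1}/e_{t−1} − m·(1 − α) )·P_{t−1}(k) + ( m·α·(k − 1)·n_{t−1}/e_{t−1} + m·(1 − α) )·P_{t−1}(k − 1). Then for every integer k ≥ m̂, the limit lim_{t→∞} P_t(k) exists. -/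
/-!
Each `P_t(k)` obeys a recurrence `(N + t + 1) x_{t+1} = (N + t - a_t) x_t + g_t` whose
coefficient `a_t ≥ 0` converges (because `n_t / e_t → 1 / (m + m̂)`) and whose forcing term `g_t`
converges as soon as `P_t(k - 1)` does. For such a recurrence the deviation `y_t = x_t - L` from
the candidate limit `L = lim g / (1 + lim a)` satisfies `(N + t + 1)|y_{t+1}| ≤ (N + t)|y_t| + |ε_t|`
with `ε_t → 0`, so `(N + t)|y_t|` grows sublinearly by Cesàro and `y_t → 0`. Induction on `k ≥ m̂`
finishes the argument.
-/

open Filter Finset Topology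

lemma tendsto_div_natCast_zero_of_le_add {u δ : ℕ → ℝ} (hu : ∀ t, 0 ≤ u t)
    (hδ : Tendsto δ atTop (𝓝 0)) (hle : ∀ᶠ t in atTop, u (t + 1) ≤ u t + δ t) :
    Tendsto (fun t => u t / t) atTop (𝓝 0) := by
  obtain ⟨T, hT⟩ := eventually_atTop.1 hle
  set C := u T - ∑ s ∈ range T, δ s
  have hbound : ∀ t, T ≤ t → u t ≤ C + ∑ s ∈ range t, δ s := by
    intro t ht
    induction t, ht using Nat.le_induction with
    | base => simp [C]
    | succ t ht ih => rw [sum_range_succ]; linarith [hT t ht]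
  have hlim : Tendsto (fun t : ℕ => C / t + (t⁻¹ : ℝ) * ∑ s ∈ range t, δ s) atTop (𝓝 0) := by
    simpa using (tendsto_const_div_atTop_nhds_zero_nat C).add hδ.cesaro
  refine squeeze_zero' (Eventually.of_forall fun t => div_nonneg (hu t) t.cast_nonneg) ?_ hlim
  filter_upwards [eventually_ge_atTop T] with t ht
  calc u t / t ≤ (C + ∑ s ∈ range t, δ s) / t := by gcongr; exact hbound t ht
    _ = C / t + (t⁻¹ : ℝ) * ∑ s ∈ range t, δ s := by rw [add_div, inv_mul_eq_div]

lemma tendsto_zero_of_recurrence {N : ℝ} (hN : 0 ≤ N) {a ε y : ℕ → ℝ}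
    (ha : ∀ᶠ t : ℕ in atTop, a t ∈ Set.Icc 0 (N + t)) (hε : Tendsto ε atTop (𝓝 0))
    (hrec : ∀ t : ℕ, (N + t + 1) * y (t + 1) = (N + t - a t) * y t + ε t) :
    Tendsto y atTop (𝓝 0) := by
  have hle : ∀ᶠ t : ℕ in atTop,
      (N + (t + 1 : ℕ)) * |y (t + 1)| ≤ (N + t) * |y t| + |ε t| := by
    filter_upwards [ha] with t ⟨ha0, haN⟩
    have hcoeff : |N + t - a t| ≤ N + t := abs_le.2 ⟨by linarith, by linarith⟩
    calc (N + (t + 1 : ℕ)) * |y (t + 1)| = |(N + t - a t) * y t + ε t| := by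
          rw [← hrec, abs_mul, abs_of_nonneg (by positivity : (0 : ℝ) ≤ N + t + 1)]
          push_cast; ring
      _ ≤ |N + t - a t| * |y t| + |ε t| := by rw [← abs_mul]; exact abs_add_le _ _
      _ ≤ (N + t) * |y t| + |ε t| := by gcongr
  have hgrowth := tendsto_div_natCast_zero_of_le_add (u := fun t : ℕ => (N + t) * |y t|)
    (fun t => by positivity) (by simpa using hε.abs) hle
  refine (tendsto_zero_iff_abs_tendsto_zero y).2 <|
    squeeze_zero' (Eventually.of_forall fun t => abs_nonneg _) ?_ hgrowth
  filter_upwards [eventually_gt_atTop 0] with t ht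
  rw [Function.comp_apply, le_div_iff₀ (by exact_mod_cast ht)]
  nlinarith [abs_nonneg (y t)]

lemma tendsto_of_recurrence {N b c : ℝ} (hN : 0 ≤ N) {a g x : ℕ → ℝ}
    (ha0 : ∀ t, 0 ≤ a t) (ha : Tendsto a atTop (𝓝 c)) (hg : Tendsto g atTop (𝓝 b))
    (hrec : ∀ t : ℕ, (N + t + 1) * x (t + 1) = (N + t - a t) * x t + g t) :
    Tendsto x atTop (𝓝 (b / (1 + c))) := by
  have hc : 0 ≤ c := ge_of_tendsto' ha ha0
  set L := b / (1 + c)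
  have hL : (1 + c) * L = b := mul_div_cancel₀ b (by positivity)
  have hε : Tendsto (fun t => g t - (1 + a t) * L) atTop (𝓝 0) := by
    simpa [hL] using hg.sub ((ha.const_add 1).mul_const L)
  have haN : ∀ᶠ t : ℕ in atTop, a t ∈ Set.Icc 0 (N + t) := by
    filter_upwards [ha.eventually (eventually_le_nhds (lt_add_one c)),
      (tendsto_natCast_atTop_atTop (R := ℝ)).eventually_ge_atTop (c + 1)] with t h1 h2
    exact ⟨ha0 t, by linarith⟩
  have hy := tendsto_zero_of_recurrence hN haN hε (y := fun t => x t - L)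
    fun t => by linear_combination hrec t
  simpa using hy.add_const L

lemma exists_tendsto_of_indegree_recurrence {n₀ e₀ m M α k b : ℝ} (hn₀ : 0 ≤ n₀)
    (he₀ : 0 ≤ e₀) (hm : 0 ≤ m) (hM : 0 < M) (hα : α ∈ Set.Icc 0 1) (hk : 0 ≤ k)
    {g x : ℕ → ℝ} (hg : Tendsto g atTop (𝓝 b))
    (hrec : ∀ t : ℕ, (n₀ + t + 1) * x (t + 1) =
      (n₀ + t - m * α * k * (n₀ + t) / (e₀ + M * t) - m * (1 - α)) * x t + g t) :
    ∃ L, Tendsto x atTop (𝓝 L) := by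
  obtain ⟨hα0, hα1⟩ := hα
  have hratio : Tendsto (fun t : ℕ => (n₀ + t) / (e₀ + M * t)) atTop (𝓝 (1 / M)) := by
    simpa using tendsto_add_mul_div_add_mul_atTop_nhds n₀ e₀ 1 hM.ne'
  refine ⟨_, tendsto_of_recurrence hn₀
    (a := fun t => m * α * k * ((n₀ + t) / (e₀ + M * t)) + m * (1 - α))
    (fun t => add_nonneg (by positivity) (mul_nonneg hm (by linarith)))
    ((hratio.const_mul _).add_const _) hg fun t => by rw [hrec]; ring⟩

theorem indegree_distribution_limit_exists_general
    (m mh : ℕ) (hm : 1 ≤ m)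
    (α : ℝ) (hα : α ∈ Set.Icc (0 : ℝ) 1)
    (n0 e0 : ℕ)
    (P : ℕ → ℕ → ℝ)
    (hbase : ∀ t : ℕ, 1 ≤ t →
      ((n0 + t : ℕ) : ℝ) * P t mh =
        (((n0 + (t - 1) : ℕ) : ℝ)
            - (m : ℝ) * (mh : ℝ) * α * ((n0 + (t - 1) : ℕ) : ℝ)
                / ((e0 + (m + mh) * (t - 1) : ℕ) : ℝ)
            - (m : ℝ) * (1 - α)) * P (t - 1) mh + 1)
    (hstep : ∀ k : ℕ, mh < k → ∀ t : ℕ, 1 ≤ t →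
      ((n0 + t : ℕ) : ℝ) * P t k =
        (((n0 + (t - 1) : ℕ) : ℝ)
            - (m : ℝ) * α * (k : ℝ) * ((n0 + (t - 1) : ℕ) : ℝ)
                / ((e0 + (m + mh) * (t - 1) : ℕ) : ℝ)
            - (m : ℝ) * (1 - α)) * P (t - 1) k
        + ((m : ℝ) * α * ((k : ℝ) - 1) * ((n0 + (t - 1) : ℕ) : ℝ)
              / ((e0 + (m + mh) * (t - 1) : ℕ) : ℝ)
            + (m : ℝ) * (1 - α)) * P (t - 1) (k - 1)) :
    ∀ k : ℕ, mh ≤ k → ∃ L : ℝ, Tendsto (fun t : ℕ => P t k) atTop (nhds L) := by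
  have hM : (0 : ℝ) < m + mh := by positivity
  intro k hk
  induction k, hk using Nat.le_induction with
  | base =>
    refine exists_tendsto_of_indegree_recurrence n0.cast_nonneg e0.cast_nonneg m.cast_nonneg hM hα
      mh.cast_nonneg (g := fun _ => 1) tendsto_const_nhds fun t => ?_
    have h := hbase (t + 1) t.succ_pos
    push_cast [Nat.add_sub_cancel] at h
    linear_combination h
  | succ k hk ih =>
    obtain ⟨L, hL⟩ := ih
    have hratio : Tendsto (fun t : ℕ => ((n0 : ℝ) + t) / (e0 + (m + mh) * t)) atTop
        (𝓝 (1 / (m + mh))) := by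
      simpa using tendsto_add_mul_div_add_mul_atTop_nhds (n0 : ℝ) e0 1 hM.ne'
    refine exists_tendsto_of_indegree_recurrence n0.cast_nonneg e0.cast_nonneg m.cast_nonneg hM hα
      (k + 1 : ℕ).cast_nonneg (((hratio.const_mul (m * α * k)).add_const (m * (1 - α))).mul hL)
      fun t => ?_
    have h := hstep (k + 1) (by omega) (t + 1) t.succ_pos
    push_cast [Nat.add_sub_cancel] at h ⊢
    linear_combination h

/-- With `n_t = n_0 + t` and `e_t = e_0 + (m + m̂)·t`, if
`P : ℕ → ℕ → ℝ` satisfies the base recurrence at in-degree `m̂` and the step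
recurrence at every in-degree `k > m̂`, then `lim_{t→∞} P_t(k)` exists for every
`k ≥ m̂`. -/
theorem indegree_distribution_limit_exists
    (m mh : ℕ) (hm : 1 ≤ m)
    (α : ℝ) (hα : α ∈ Set.Icc (0 : ℝ) 1)
    (n0 e0 : ℕ) (hn0 : 1 ≤ n0) (he0 : 1 ≤ e0)
    (P : ℕ → ℕ → ℝ)
    (hbase : ∀ t : ℕ, 1 ≤ t →
      ((n0 + t : ℕ) : ℝ) * P t mh =
        (((n0 + (t - 1) : ℕ) : ℝ)
            - (m : ℝ) * (mh : ℝ) * α * ((n0 + (t - 1) : ℕ) : ℝ)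
                / ((e0 + (m + mh) * (t - 1) : ℕ) : ℝ)
            - (m : ℝ) * (1 - α)) * P (t - 1) mh + 1)
    (hstep : ∀ k : ℕ, mh < k → ∀ t : ℕ, 1 ≤ t →
      ((n0 + t : ℕ) : ℝ) * P t k =
        (((n0 + (t - 1) : ℕ) : ℝ)
            - (m : ℝ) * α * (k : ℝ) * ((n0 + (t - 1) : ℕ) : ℝ)
                / ((e0 + (m + mh) * (t - 1) : ℕ) : ℝ)
            - (m : ℝ) * (1 - α)) * P (t - 1) k
        + ((m : ℝ) * α * ((k : ℝ) - 1) * ((n0 + (t - 1) : ℕ) : ℝ)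
              / ((e0 + (m + mh) * (t - 1) : ℕ) : ℝ)
            + (m : ℝ) * (1 - α)) * P (t - 1) (k - 1)) :
    ∀ k : ℕ, mh ≤ k → ∃ L : ℝ, Tendsto (fun t : ℕ => P t k) atTop (nhds L) :=
  indegree_distribution_limit_exists_general m mh hm α hα n0 e0 P hbase hstep
end

section
/- Let N = m·t and let (α_d)_{d ∈ ℕ} be the sequence defined by an initial value α_0 ∈ (0,1) and the EM update α_{d+1} = (1/N)·Σ_{i=1}^{t} Σ_{j=1}^{m} (α_d·k_{ij}/e_{i−1}) / ( α_d·k_{ij}/e_{i−1} + (1 − α_d)/n_{i−1} ). Then the sequence (α_d) converges. -/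
/-!
Each summand of the update is the posterior probability `x a / (x a + (1 - x) b)` that a node
was chosen by preferential attachment; for `a, b > 0` it is a monotone map of `[0, 1]` into
itself, and so is their average. An orbit of a monotone self-map of an interval is monotone:
whichever way the first step goes, monotonicity propagates that comparison to all later steps.
A bounded monotone sequence converges.
-/

open Filter Set Finset

section Orbit

variable {β : Type*} {f : β → β} {s : Set β} {u : ℕ → β}

lemma mem_of_mapsTo_of_succ_eq (hmaps : MapsTo f s s) (hu0 : u 0 ∈ s)
    (hu : ∀ d, u (d + 1) = f (u d)) (d : ℕ) : u d ∈ s := by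
  induction d with
  | zero => exact hu0
  | succ d ih => exact hu d ▸ hmaps ih

lemma monotone_or_antitone_of_monotoneOn_of_mapsTo [LinearOrder β] (hf : MonotoneOn f s)
    (hmaps : MapsTo f s s) (hu0 : u 0 ∈ s) (hu : ∀ d, u (d + 1) = f (u d)) :
    Monotone u ∨ Antitone u := by
  have hmem := mem_of_mapsTo_of_succ_eq hmaps hu0 hu
  have hstep : ∀ c d, u c ≤ u d → u (c + 1) ≤ u (d + 1) := fun c d hcd => by
    rw [hu c, hu d]
    exact hf (hmem c) (hmem d) hcd
  rcases le_total (u 0) (u 1) with h01 | h10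
  · refine .inl (monotone_nat_of_le_succ fun d => ?_)
    induction d with
    | zero => exact h01
    | succ d ih => exact hstep d (d + 1) ih
  · refine .inr (antitone_nat_of_succ_le fun d => ?_)
    induction d with
    | zero => exact h10
    | succ d ih => exact hstep (d + 1) d ih

lemma exists_tendsto_of_monotoneOn_of_mapsTo_Icc [ConditionallyCompleteLinearOrder β]
    [TopologicalSpace β] [OrderTopology β] {a b : β}
    (hf : MonotoneOn f (Icc a b)) (hmaps : MapsTo f (Icc a b) (Icc a b)) (hu0 : u 0 ∈ Icc a b)
    (hu : ∀ d, u (d + 1) = f (u d)) : ∃ L, Tendsto u atTop (nhds L) := by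
  have hrange : range u ⊆ Icc a b := range_subset_iff.2 (mem_of_mapsTo_of_succ_eq hmaps hu0 hu)
  rcases monotone_or_antitone_of_monotoneOn_of_mapsTo hf hmaps hu0 hu with hmono | hanti
  · exact ⟨_, tendsto_atTop_ciSup hmono (bddAbove_Icc.mono hrange)⟩
  · exact ⟨_, tendsto_atTop_ciInf hanti (bddBelow_Icc.mono hrange)⟩

end Orbit

section Responsibility

noncomputable def responsibility (a b x : ℝ) : ℝ := x * a / (x * a + (1 - x) * b)

variable {a b : ℝ}

lemma responsibility_denom_pos (ha : 0 < a) (hb : 0 < b) {x : ℝ} (hx : x ∈ Icc (0 : ℝ) 1) :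
    0 < x * a + (1 - x) * b := by
  rcases hx.1.eq_or_lt with rfl | hx0
  · simpa using hb
  · nlinarith [mul_pos hx0 ha, hx.2]

lemma mapsTo_responsibility (ha : 0 < a) (hb : 0 < b) :
    MapsTo (responsibility a b) (Icc 0 1) (Icc 0 1) := fun x hx => by
  have hden := responsibility_denom_pos ha hb hx
  refine ⟨div_nonneg (mul_nonneg hx.1 ha.le) hden.le, (div_le_one hden).2 ?_⟩
  nlinarith [hx.2]

lemma monotoneOn_responsibility (ha : 0 < a) (hb : 0 < b) :
    MonotoneOn (responsibility a b) (Icc 0 1) := fun x hx y hy hxy => by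
  unfold responsibility
  rw [div_le_div_iff₀ (responsibility_denom_pos ha hb hx) (responsibility_denom_pos ha hb hy)]
  nlinarith [mul_pos ha hb]

end Responsibility

section Average

variable {ι κ : Type*} {s : Finset ι} {r : Finset κ} {g : ι → κ → ℝ → ℝ}

lemma mapsTo_average_Icc (hg : ∀ i ∈ s, ∀ j ∈ r, MapsTo (g i j) (Icc 0 1) (Icc 0 1)) :
    MapsTo (fun x => 1 / ((#r : ℝ) * #s) * ∑ i ∈ s, ∑ j ∈ r, g i j x) (Icc 0 1) (Icc 0 1) :=
  fun x hx => by
    have hsum_le : ∑ i ∈ s, ∑ j ∈ r, g i j x ≤ (#r : ℝ) * #s := by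
      calc ∑ i ∈ s, ∑ j ∈ r, g i j x ≤ ∑ _i ∈ s, ∑ _j ∈ r, (1 : ℝ) :=
            sum_le_sum fun i hi => sum_le_sum fun j hj => (hg i hi j hj hx).2
        _ = (#r : ℝ) * #s := by simp [mul_comm]
    refine ⟨mul_nonneg (by positivity) (sum_nonneg fun i hi => sum_nonneg fun j hj =>
      (hg i hi j hj hx).1), ?_⟩
    calc 1 / ((#r : ℝ) * #s) * ∑ i ∈ s, ∑ j ∈ r, g i j x
        ≤ 1 / ((#r : ℝ) * #s) * ((#r : ℝ) * #s) :=
          mul_le_mul_of_nonneg_left hsum_le (by positivity)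
      _ ≤ 1 := by rw [one_div_mul_eq_div]; exact div_self_le_one _

lemma monotoneOn_average {t : Set ℝ} (hg : ∀ i ∈ s, ∀ j ∈ r, MonotoneOn (g i j) t) :
    MonotoneOn (fun x => 1 / ((#r : ℝ) * #s) * ∑ i ∈ s, ∑ j ∈ r, g i j x) t :=
  fun x hx y hy hxy => mul_le_mul_of_nonneg_left
    (sum_le_sum fun i hi => sum_le_sum fun j hj => hg i hi j hj hx hy hxy) (by positivity)

end Average

theorem em_iteration_converges_general
    (t m : ℕ)
    (k : ℕ → ℕ → ℕ)
    (hk : ∀ i ∈ Finset.Icc 1 t, ∀ j ∈ Finset.Icc 1 m, 0 < k i j)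
    (n e : ℕ → ℕ)
    (hn : ∀ i ∈ Finset.Icc 1 t, 0 < n (i - 1))
    (he : ∀ i ∈ Finset.Icc 1 t, 0 < e (i - 1))
    (α : ℕ → ℝ) (hα0 : α 0 ∈ Set.Ioo (0 : ℝ) 1)
    (hrec : ∀ d : ℕ,
      α (d + 1) = (1 / ((m : ℝ) * (t : ℝ))) *
        ∑ i ∈ Finset.Icc 1 t, ∑ j ∈ Finset.Icc 1 m,
          (α d * (k i j : ℝ) / (e (i - 1) : ℝ)) /
            (α d * (k i j : ℝ) / (e (i - 1) : ℝ) + (1 - α d) / (n (i - 1) : ℝ))) :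
    ∃ L : ℝ, Tendsto α atTop (nhds L) := by
  set g : ℕ → ℕ → ℝ → ℝ := fun i j => responsibility (k i j / e (i - 1)) (n (i - 1))⁻¹
  have ha : ∀ i ∈ Finset.Icc 1 t, ∀ j ∈ Finset.Icc 1 m, (0 : ℝ) < k i j / e (i - 1) :=
    fun i hi j hj => by have := hk i hi j hj; have := he i hi; positivity
  have hb : ∀ i ∈ Finset.Icc 1 t, (0 : ℝ) < (n (i - 1) : ℝ)⁻¹ :=
    fun i hi => by have := hn i hi; positivity
  have hcard : ∀ N : ℕ, #(Finset.Icc 1 N) = N := by simp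
  have hstep : ∀ d, α (d + 1) =
      1 / ((#(Finset.Icc 1 m) : ℝ) * #(Finset.Icc 1 t)) *
        ∑ i ∈ Finset.Icc 1 t, ∑ j ∈ Finset.Icc 1 m, g i j (α d) := fun d => by
    simp only [hrec d, hcard, g, responsibility, mul_div_assoc, div_eq_mul_inv (1 - α d)]
  exact exists_tendsto_of_monotoneOn_of_mapsTo_Icc
    (monotoneOn_average fun i hi j hj => monotoneOn_responsibility (ha i hi j hj) (hb i hi))
    (mapsTo_average_Icc fun i hi j hj => mapsTo_responsibility (ha i hi j hj) (hb i hi))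
    (Ioo_subset_Icc_self hα0) hstep

/-- The EM iteration
`α_{d+1} = (1/N)·Σ_{i=1}^{t} Σ_{j=1}^{m} (α_d·k_{ij}/e_{i−1}) /
  (α_d·k_{ij}/e_{i−1} + (1 − α_d)/n_{i−1})`, `N = m·t`, started at
`α_0 ∈ (0,1)`, produces a convergent sequence. -/
theorem em_iteration_converges
    (t m : ℕ) (ht : 1 ≤ t) (hm : 1 ≤ m)
    (k : ℕ → ℕ → ℕ)
    (hk : ∀ i ∈ Finset.Icc 1 t, ∀ j ∈ Finset.Icc 1 m, 0 < k i j)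
    (n e : ℕ → ℕ)
    (hn : ∀ i ∈ Finset.Icc 1 t, 0 < n (i - 1))
    (he : ∀ i ∈ Finset.Icc 1 t, 0 < e (i - 1))
    (α : ℕ → ℝ) (hα0 : α 0 ∈ Set.Ioo (0 : ℝ) 1)
    (hrec : ∀ d : ℕ,
      α (d + 1) = (1 / ((m : ℝ) * (t : ℝ))) *
        ∑ i ∈ Finset.Icc 1 t, ∑ j ∈ Finset.Icc 1 m,
          (α d * (k i j : ℝ) / (e (i - 1) : ℝ)) /
            (α d * (k i j : ℝ) / (e (i - 1) : ℝ) + (1 - α d) / (n (i - 1) : ℝ))) :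
    ∃ L : ℝ, Tendsto α atTop (nhds L) :=
  em_iteration_converges_general t m k hk n e hn he α hα0 hrec
end

section
/- Suppose 0 < α < 1. Then for every integer k ≥ m̂, the stationary in-degree distribution satisfies P_∞(k) = (m + m̂)·Γ( (m̂ + m·(1 + m + m̂ − m·α))/(m·α) )·Γ( k + (m + m̂)·(1 − α)/α ) / ( m·α·Γ( (m + m̂ − m·α)/α )·Γ( (m̂ + m·(m + m̂ + k·α − (m + m̂)·α + α + 1))/(m·α) ) ). -/
theorem stationary_indegree_alpha_mid
    (m mh : ℕ) (hm : 1 ≤ m)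
    (α : ℝ) (hα : α ∈ Set.Icc (0 : ℝ) 1)
    (P : ℕ → ℝ)
    (hbase : P mh = ((m : ℝ) + (mh : ℝ)) /
      ((m : ℝ) ^ 2 + (m : ℝ) * (mh : ℝ) + (m : ℝ) + (mh : ℝ) - α * (m : ℝ) ^ 2))
    (hrec : ∀ k : ℕ, mh < k →
      P k = ((α * ((k : ℝ) * (m : ℝ) - (m : ℝ) ^ 2 - (m : ℝ) * (mh : ℝ) - (m : ℝ))
                + (m : ℝ) ^ 2 + (m : ℝ) * (mh : ℝ)) /
             (α * ((k : ℝ) * (m : ℝ) - (m : ℝ) ^ 2 - (m : ℝ) * (mh : ℝ))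
                + (m : ℝ) ^ 2 + (m : ℝ) * (mh : ℝ) + (m : ℝ) + (mh : ℝ))) * P (k - 1))
    (hα0 : 0 < α) (hα1 : α < 1) :
    ∀ k : ℕ, mh ≤ k →
      P k = ((m : ℝ) + (mh : ℝ))
              * Real.Gamma (((mh : ℝ) + (m : ℝ) * (1 + (m : ℝ) + (mh : ℝ) - (m : ℝ) * α))
                  / ((m : ℝ) * α))
              * Real.Gamma ((k : ℝ) + ((m : ℝ) + (mh : ℝ)) * (1 - α) / α) /
            ((m : ℝ) * α
              * Real.Gamma (((m : ℝ) + (mh : ℝ) - (m : ℝ) * α) / α)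
              * Real.Gamma (((mh : ℝ) + (m : ℝ) * ((m : ℝ) + (mh : ℝ) + (k : ℝ) * α
                  - ((m : ℝ) + (mh : ℝ)) * α + α + 1)) / ((m : ℝ) * α))) := by
  have hM : (1:ℝ) ≤ (m:ℝ) := by exact_mod_cast hm
  have hM0 : (0:ℝ) < (m:ℝ) := lt_of_lt_of_le one_pos hM
  have hH : (0:ℝ) ≤ (mh:ℝ) := Nat.cast_nonneg mh
  have hMα : (0:ℝ) < (m:ℝ) * α := mul_pos hM0 hα0
  have h1α : (0:ℝ) < 1 - α := by linarith
  have hXpos : (0:ℝ) < ((mh : ℝ) + (m : ℝ) * (1 + (m : ℝ) + (mh : ℝ) - (m : ℝ) * α))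
      / ((m : ℝ) * α) := by
    apply div_pos _ hMα
    nlinarith [mul_pos hM0 h1α]
  have hYpos : (0:ℝ) < ((m : ℝ) + (mh : ℝ) - (m : ℝ) * α) / α := by
    apply div_pos _ hα0
    nlinarith [mul_pos hM0 h1α]
  have hΓX : Real.Gamma (((mh : ℝ) + (m : ℝ) * (1 + (m : ℝ) + (mh : ℝ) - (m : ℝ) * α))
      / ((m : ℝ) * α)) ≠ 0 := ne_of_gt (Real.Gamma_pos_of_pos hXpos)
  have hΓY : Real.Gamma (((m : ℝ) + (mh : ℝ) - (m : ℝ) * α) / α) ≠ 0 :=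
    ne_of_gt (Real.Gamma_pos_of_pos hYpos)
  intro k hk
  induction k, hk using Nat.le_induction with
  | base =>
    rw [hbase]
    have e1 : ((mh : ℝ) + (m : ℝ) * ((m : ℝ) + (mh : ℝ) + (mh : ℝ) * α
        - ((m : ℝ) + (mh : ℝ)) * α + α + 1)) / ((m : ℝ) * α)
        = ((mh : ℝ) + (m : ℝ) * (1 + (m : ℝ) + (mh : ℝ) - (m : ℝ) * α))
          / ((m : ℝ) * α) + 1 := by
      field_simp
      ring
    have e2 : ((mh:ℝ)) + ((m : ℝ) + (mh : ℝ)) * (1 - α) / α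
        = ((m : ℝ) + (mh : ℝ) - (m : ℝ) * α) / α := by
      field_simp
      ring
    rw [e1, e2, Real.Gamma_add_one (ne_of_gt hXpos)]
    have hden : ((m : ℝ) ^ 2 + (m : ℝ) * (mh : ℝ) + (m : ℝ) + (mh : ℝ) - α * (m : ℝ) ^ 2)
        = (m:ℝ) * α * (((mh : ℝ) + (m : ℝ) * (1 + (m : ℝ) + (mh : ℝ) - (m : ℝ) * α))
          / ((m : ℝ) * α)) := by
      field_simp
      ring
    rw [hden]
    set X := ((mh : ℝ) + (m : ℝ) * (1 + (m : ℝ) + (mh : ℝ) - (m : ℝ) * α)) / ((m : ℝ) * α)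
      with hXdef
    set GX := Real.Gamma X with hGX
    set GY := Real.Gamma (((m : ℝ) + (mh : ℝ) - (m : ℝ) * α) / α) with hGY
    field_simp
  | succ k hk ih =>
    have hrecK := hrec (k+1) (by omega)
    rw [Nat.add_sub_cancel] at hrecK
    rw [hrecK, ih]
    have hkα : (0:ℝ) ≤ (k:ℝ) * α := mul_nonneg (Nat.cast_nonneg k) hα0.le
    have hMH1α : (0:ℝ) ≤ ((m:ℝ) + (mh:ℝ)) * (1 - α) := mul_nonneg (by positivity) h1α.le
    have hDpos : (0:ℝ) < ((mh : ℝ) + (m : ℝ) * ((m : ℝ) + (mh : ℝ) + (k : ℝ) * α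
        - ((m : ℝ) + (mh : ℝ)) * α + α + 1)) / ((m : ℝ) * α) := by
      apply div_pos _ hMα
      nlinarith [mul_nonneg hM0.le hMH1α, mul_nonneg hM0.le hkα]
    have hcpos : (0:ℝ) < (k : ℝ) + ((m : ℝ) + (mh : ℝ)) * (1 - α) / α := by
      have h2 : (0:ℝ) < ((m : ℝ) + (mh : ℝ)) * (1 - α) / α := by
        exact div_pos (mul_pos (by positivity) h1α) hα0
      have hk0 : (0:ℝ) ≤ (k:ℝ) := Nat.cast_nonneg k
      linarith
    have hΓD : Real.Gamma (((mh : ℝ) + (m : ℝ) * ((m : ℝ) + (mh : ℝ) + (k : ℝ) * α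
        - ((m : ℝ) + (mh : ℝ)) * α + α + 1)) / ((m : ℝ) * α)) ≠ 0 :=
      ne_of_gt (Real.Gamma_pos_of_pos hDpos)
    have hΓc : Real.Gamma ((k : ℝ) + ((m : ℝ) + (mh : ℝ)) * (1 - α) / α) ≠ 0 :=
      ne_of_gt (Real.Gamma_pos_of_pos hcpos)
    push_cast
    have e1 : ((k : ℝ) + 1) + ((m : ℝ) + (mh : ℝ)) * (1 - α) / α
        = ((k : ℝ) + ((m : ℝ) + (mh : ℝ)) * (1 - α) / α) + 1 := by ring
    have e2 : ((mh : ℝ) + (m : ℝ) * ((m : ℝ) + (mh : ℝ) + ((k : ℝ) + 1) * α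
        - ((m : ℝ) + (mh : ℝ)) * α + α + 1)) / ((m : ℝ) * α)
        = ((mh : ℝ) + (m : ℝ) * ((m : ℝ) + (mh : ℝ) + (k : ℝ) * α
          - ((m : ℝ) + (mh : ℝ)) * α + α + 1)) / ((m : ℝ) * α) + 1 := by
      field_simp
      ring
    rw [e1, e2, Real.Gamma_add_one (ne_of_gt hcpos), Real.Gamma_add_one (ne_of_gt hDpos)]
    have hnum : α * (((k : ℝ) + 1) * (m : ℝ) - (m : ℝ) ^ 2 - (m : ℝ) * (mh : ℝ) - (m : ℝ))
        + (m : ℝ) ^ 2 + (m : ℝ) * (mh : ℝ)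
        = (m:ℝ) * α * ((k : ℝ) + ((m : ℝ) + (mh : ℝ)) * (1 - α) / α) := by
      field_simp
      ring
    have hden : α * (((k : ℝ) + 1) * (m : ℝ) - (m : ℝ) ^ 2 - (m : ℝ) * (mh : ℝ))
        + (m : ℝ) ^ 2 + (m : ℝ) * (mh : ℝ) + (m : ℝ) + (mh : ℝ)
        = (m:ℝ) * α * (((mh : ℝ) + (m : ℝ) * ((m : ℝ) + (mh : ℝ) + (k : ℝ) * α
          - ((m : ℝ) + (mh : ℝ)) * α + α + 1)) / ((m : ℝ) * α)) := by
      field_simp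
      ring
    rw [hnum, hden]
    set c := (k : ℝ) + ((m : ℝ) + (mh : ℝ)) * (1 - α) / α with hc
    set D := ((mh : ℝ) + (m : ℝ) * ((m : ℝ) + (mh : ℝ) + (k : ℝ) * α
      - ((m : ℝ) + (mh : ℝ)) * α + α + 1)) / ((m : ℝ) * α) with hD
    set GX := Real.Gamma (((mh : ℝ) + (m : ℝ) * (1 + (m : ℝ) + (mh : ℝ) - (m : ℝ) * α))
      / ((m : ℝ) * α)) with hGX
    set GY := Real.Gamma (((m : ℝ) + (mh : ℝ) - (m : ℝ) * α) / α) with hGY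
    set Gc := Real.Gamma c with hGc
    set GD := Real.Gamma D with hGD
    rw [mul_div_mul_left _ _ hMα.ne']
    field_simp
end

section
/- Suppose α = 0. Then for every integer k ≥ m̂, the asymptotic expected complementary cumulative in-degree distribution satisfies F̄_∞(k) = 1 − Σ_{j=m̂}^{k−1} P_∞(j) = ( m/(1 + m) )^{k − m̂}. -/
/-!
For `α = 0` the recurrence has the constant ratio `r = m / (1 + m)` and the initial value is
`1 / (1 + m) = 1 - r`, so `P_∞` is a geometric distribution on `{m̂, m̂ + 1, …}`. Its tail is
then the finite geometric sum `1 - (1 - r) ∑_{i < n} rⁱ = rⁿ`.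
-/

open Finset

theorem eq_pow_sub_mul_of_eq_mul_pred {R : Type*} [Monoid R] {P : ℕ → R} {a : ℕ} {c r : R}
    (h₀ : P a = c) (hstep : ∀ k, a < k → P k = r * P (k - 1)) :
    ∀ k, a ≤ k → P k = r ^ (k - a) * c := by
  intro k hk
  induction k, hk using Nat.le_induction with
  | base => simp [h₀]
  | succ k hk ih =>
    rw [hstep (k + 1) (Nat.lt_succ_of_le hk), Nat.add_sub_cancel, ih, Nat.succ_sub hk,
      pow_succ', mul_assoc]

theorem one_sub_sum_Ico_pow_sub_mul {R : Type*} [CommRing R] (a k : ℕ) (r : R) :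
    1 - ∑ j ∈ Ico a k, r ^ (j - a) * (1 - r) = r ^ (k - a) := by
  rw [sum_Ico_eq_sum_range, ← sum_mul]
  simp only [add_tsub_cancel_left]
  rw [mul_comm, mul_neg_geom_sum, sub_sub_cancel]

theorem ccdf_alpha_zero_general
    (m mh : ℕ) (hm : 1 ≤ m)
    (α : ℝ)
    (P : ℕ → ℝ)
    (hbase : P mh = ((m : ℝ) + (mh : ℝ)) /
      ((m : ℝ) ^ 2 + (m : ℝ) * (mh : ℝ) + (m : ℝ) + (mh : ℝ) - α * (m : ℝ) ^ 2))
    (hrec : ∀ k : ℕ, mh < k →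
      P k = ((α * ((k : ℝ) * (m : ℝ) - (m : ℝ) ^ 2 - (m : ℝ) * (mh : ℝ) - (m : ℝ))
                + (m : ℝ) ^ 2 + (m : ℝ) * (mh : ℝ)) /
             (α * ((k : ℝ) * (m : ℝ) - (m : ℝ) ^ 2 - (m : ℝ) * (mh : ℝ))
                + (m : ℝ) ^ 2 + (m : ℝ) * (mh : ℝ) + (m : ℝ) + (mh : ℝ))) * P (k - 1))
    (hα0 : α = 0) :
    ∀ k : ℕ, mh ≤ k →
      1 - ∑ j ∈ Finset.Ico mh k, P j = ((m : ℝ) / (1 + (m : ℝ))) ^ (k - mh) := by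
  subst hα0
  simp only [zero_mul, sub_zero, zero_add] at hbase hrec
  have hm_pos : (0 : ℝ) < m := by exact_mod_cast hm
  have h_one_add : (1 + m : ℝ) ≠ 0 := by positivity
  have h_add : (m + mh : ℝ) ≠ 0 := by positivity
  have hden : (m : ℝ) ^ 2 + m * mh + m + mh = (1 + m) * (m + mh) := by ring
  have h₀ : P mh = 1 - m / (1 + m) := by
    rw [hbase, hden]
    field_simp
    ring
  have hstep : ∀ k, mh < k → P k = m / (1 + m) * P (k - 1) := by
    intro k hk
    rw [hrec k hk, hden]
    field_simp
  intro k _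
  rw [← one_sub_sum_Ico_pow_sub_mul mh k]
  exact congrArg (1 - ·) <|
    sum_congr rfl fun j hj ↦ eq_pow_sub_mul_of_eq_mul_pred h₀ hstep j (mem_Ico.1 hj).1

theorem ccdf_alpha_zero
    (m mh : ℕ) (hm : 1 ≤ m)
    (α : ℝ) (hα : α ∈ Set.Icc (0 : ℝ) 1)
    (P : ℕ → ℝ)
    (hbase : P mh = ((m : ℝ) + (mh : ℝ)) /
      ((m : ℝ) ^ 2 + (m : ℝ) * (mh : ℝ) + (m : ℝ) + (mh : ℝ) - α * (m : ℝ) ^ 2))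
    (hrec : ∀ k : ℕ, mh < k →
      P k = ((α * ((k : ℝ) * (m : ℝ) - (m : ℝ) ^ 2 - (m : ℝ) * (mh : ℝ) - (m : ℝ))
                + (m : ℝ) ^ 2 + (m : ℝ) * (mh : ℝ)) /
             (α * ((k : ℝ) * (m : ℝ) - (m : ℝ) ^ 2 - (m : ℝ) * (mh : ℝ))
                + (m : ℝ) ^ 2 + (m : ℝ) * (mh : ℝ) + (m : ℝ) + (mh : ℝ))) * P (k - 1))
    (hα0 : α = 0) :
    ∀ k : ℕ, mh ≤ k →
      1 - ∑ j ∈ Finset.Ico mh k, P j = ((m : ℝ) / (1 + (m : ℝ))) ^ (k - mh) :=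
  ccdf_alpha_zero_general m mh hm α P hbase hrec hα0
end

section
/- Suppose 0 < α < 1. Then for every integer k ≥ m̂, the asymptotic expected complementary cumulative in-degree distribution satisfies F̄_∞(k) = 1 − Σ_{j=m̂}^{k−1} P_∞(j) = Γ( (m̂ + m·(1 + m + m̂ − α·m))/(m·α) )·Γ( k + (m + m̂)·(1 − α)/α ) / ( Γ( (m̂ + m·(1 − α))/α )·Γ( (m̂ + m·(m + m̂ + k·α − (m + m̂)·α + 1))/(m·α) ) ). -/
/-!
Dividing numerator and denominator of the recurrence by `m α` puts it in the form
`P k = (k - 1 + c) / (k + c + e) · P (k - 1)` with `P m̂ = e / (m̂ + c + e)`, where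
`c = (m + m̂)(1 - α)/α` and `e = (m + m̂)/(m α)`. Then
`P k = e / (k + c + e) · R k` for the Gamma ratio `R k = Γ(m̂+c+e) Γ(k+c) / (Γ(m̂+c) Γ(k+c+e))`,
and since `R k - P k = (k + c) / (k + c + e) · R k = R (k + 1)`, the tail sums telescope to `R k`.
-/

open Finset

noncomputable def gammaRatio (n : ℕ) (c e : ℝ) (k : ℕ) : ℝ :=
  Real.Gamma (n + c + e) * Real.Gamma (k + c) / (Real.Gamma (n + c) * Real.Gamma (k + c + e))

section GammaRatio

variable {n : ℕ} {c e : ℝ}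

lemma gammaRatio_self (hc : 0 < (n : ℝ) + c) (he : 0 < (n : ℝ) + c + e) :
    gammaRatio n c e n = 1 := by
  rw [gammaRatio, mul_comm (Real.Gamma _)]
  exact div_self (mul_ne_zero (Real.Gamma_pos_of_pos hc).ne' (Real.Gamma_pos_of_pos he).ne')

lemma gammaRatio_succ {k : ℕ} (hkc : (k : ℝ) + c ≠ 0) (hkce : (k : ℝ) + c + e ≠ 0) :
    gammaRatio n c e (k + 1) = (k + c) / (k + c + e) * gammaRatio n c e k := by
  have hΓc : Real.Gamma ((k + 1 : ℕ) + c) = (k + c) * Real.Gamma (k + c) := by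
    rw [Nat.cast_succ, add_right_comm, Real.Gamma_add_one hkc]
  have hΓce : Real.Gamma ((k + 1 : ℕ) + c + e) = (k + c + e) * Real.Gamma (k + c + e) := by
    rw [Nat.cast_succ, add_right_comm _ 1 c, add_right_comm _ 1 e, Real.Gamma_add_one hkce]
  simp only [gammaRatio, hΓc, hΓce]
  field_simp

lemma gammaRatio_sub_mul_eq_succ {k : ℕ} (hkc : (k : ℝ) + c ≠ 0) (hkce : (k : ℝ) + c + e ≠ 0) :
    gammaRatio n c e k - e / (k + c + e) * gammaRatio n c e k = gammaRatio n c e (k + 1) := by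
  rw [gammaRatio_succ hkc hkce]
  field_simp
  ring

variable {P : ℕ → ℝ}
  (hc : 0 < (n : ℝ) + c) (he : 0 < (n : ℝ) + c + e)
  (hbase : P n = e / (n + c + e))
  (hrec : ∀ k : ℕ, n < k → P k = (k - 1 + c) / (k + c + e) * P (k - 1))
include hc he hbase hrec

theorem eq_mul_gammaRatio_of_rec {k : ℕ} (hk : n ≤ k) :
    P k = e / (k + c + e) * gammaRatio n c e k := by
  induction k, hk using Nat.le_induction with
  | base => rw [hbase, gammaRatio_self hc he, mul_one]
  | succ k hk ih =>
    have hkc : 0 < (k : ℝ) + c := by linarith [(Nat.cast_le (α := ℝ)).2 hk]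
    have hkce : 0 < (k : ℝ) + c + e := by linarith [(Nat.cast_le (α := ℝ)).2 hk]
    rw [hrec (k + 1) (Nat.lt_succ_of_le hk), Nat.add_sub_cancel, ih,
      gammaRatio_succ hkc.ne' hkce.ne']
    push_cast
    field_simp
    ring

theorem one_sub_sum_Ico_eq_gammaRatio {k : ℕ} (hk : n ≤ k) :
    1 - ∑ j ∈ Ico n k, P j = gammaRatio n c e k := by
  induction k, hk using Nat.le_induction with
  | base => rw [Ico_self, sum_empty, sub_zero, gammaRatio_self hc he]
  | succ k hk ih =>
    have hkc : 0 < (k : ℝ) + c := by linarith [(Nat.cast_le (α := ℝ)).2 hk]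
    have hkce : 0 < (k : ℝ) + c + e := by linarith [(Nat.cast_le (α := ℝ)).2 hk]
    rw [sum_Ico_succ_top hk, ← sub_sub, ih, eq_mul_gammaRatio_of_rec hc he hbase hrec hk,
      gammaRatio_sub_mul_eq_succ hkc.ne' hkce.ne']

end GammaRatio

section Normalisation

variable {m h α : ℝ}

lemma base_coeff_eq_normalized (hmα : m * α ≠ 0) :
    (m + h) / (m ^ 2 + m * h + m + h - α * m ^ 2) =
      (m + h) / (m * α) / (h + (m + h) * (1 - α) / α + (m + h) / (m * α)) := by
  have hm : m ≠ 0 := left_ne_zero_of_mul hmα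
  have hα : α ≠ 0 := right_ne_zero_of_mul hmα
  rw [← mul_div_mul_left ((m + h) / (m * α)) _ hmα]
  congr 1
  · field_simp
  · field_simp
    ring

lemma rec_coeff_eq_normalized (hmα : m * α ≠ 0) (k : ℝ) :
    (α * (k * m - m ^ 2 - m * h - m) + m ^ 2 + m * h) /
        (α * (k * m - m ^ 2 - m * h) + m ^ 2 + m * h + m + h) =
      (k - 1 + (m + h) * (1 - α) / α) / (k + (m + h) * (1 - α) / α + (m + h) / (m * α)) := by
  have hm : m ≠ 0 := left_ne_zero_of_mul hmα
  have hα : α ≠ 0 := right_ne_zero_of_mul hmα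
  rw [← mul_div_mul_left (k - 1 + (m + h) * (1 - α) / α) _ hmα]
  congr 1 <;> field_simp <;> ring

end Normalisation

theorem ccdf_alpha_mid_general
    (m mh : ℕ) (hm : 1 ≤ m)
    (α : ℝ)
    (P : ℕ → ℝ)
    (hbase : P mh = ((m : ℝ) + (mh : ℝ)) /
      ((m : ℝ) ^ 2 + (m : ℝ) * (mh : ℝ) + (m : ℝ) + (mh : ℝ) - α * (m : ℝ) ^ 2))
    (hrec : ∀ k : ℕ, mh < k →
      P k = ((α * ((k : ℝ) * (m : ℝ) - (m : ℝ) ^ 2 - (m : ℝ) * (mh : ℝ) - (m : ℝ))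
                + (m : ℝ) ^ 2 + (m : ℝ) * (mh : ℝ)) /
             (α * ((k : ℝ) * (m : ℝ) - (m : ℝ) ^ 2 - (m : ℝ) * (mh : ℝ))
                + (m : ℝ) ^ 2 + (m : ℝ) * (mh : ℝ) + (m : ℝ) + (mh : ℝ))) * P (k - 1))
    (hα0 : 0 < α) (hα1 : α < 1) :
    ∀ k : ℕ, mh ≤ k →
      1 - ∑ j ∈ Finset.Ico mh k, P j =
        Real.Gamma (((mh : ℝ) + (m : ℝ) * (1 + (m : ℝ) + (mh : ℝ) - α * (m : ℝ)))
            / ((m : ℝ) * α))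
          * Real.Gamma ((k : ℝ) + ((m : ℝ) + (mh : ℝ)) * (1 - α) / α) /
        (Real.Gamma (((mh : ℝ) + (m : ℝ) * (1 - α)) / α)
          * Real.Gamma (((mh : ℝ) + (m : ℝ) * ((m : ℝ) + (mh : ℝ) + (k : ℝ) * α
              - ((m : ℝ) + (mh : ℝ)) * α + 1)) / ((m : ℝ) * α))) := by
  intro k hk
  have hm₀ : (0 : ℝ) < m := by exact_mod_cast hm
  have hmα : (m : ℝ) * α ≠ 0 := (mul_pos hm₀ hα0).ne'
  have hc : 0 < (mh : ℝ) + ((m : ℝ) + mh) * (1 - α) / α := by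
    have : 0 < ((m : ℝ) + mh) * (1 - α) / α := div_pos (by nlinarith) hα0
    positivity
  have he : 0 < (mh : ℝ) + ((m : ℝ) + mh) * (1 - α) / α + ((m : ℝ) + mh) / (m * α) := by
    have : 0 < ((m : ℝ) + mh) / (m * α) := by positivity
    linarith
  rw [one_sub_sum_Ico_eq_gammaRatio hc he (hbase.trans (base_coeff_eq_normalized hmα))
    (fun j hj => (hrec j hj).trans (by rw [rec_coeff_eq_normalized hmα])) hk, gammaRatio]
  congr 3 <;> field_simp <;> ring

theorem ccdf_alpha_mid
    (m mh : ℕ) (hm : 1 ≤ m)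
    (α : ℝ) (hα : α ∈ Set.Icc (0 : ℝ) 1)
    (P : ℕ → ℝ)
    (hbase : P mh = ((m : ℝ) + (mh : ℝ)) /
      ((m : ℝ) ^ 2 + (m : ℝ) * (mh : ℝ) + (m : ℝ) + (mh : ℝ) - α * (m : ℝ) ^ 2))
    (hrec : ∀ k : ℕ, mh < k →
      P k = ((α * ((k : ℝ) * (m : ℝ) - (m : ℝ) ^ 2 - (m : ℝ) * (mh : ℝ) - (m : ℝ))
                + (m : ℝ) ^ 2 + (m : ℝ) * (mh : ℝ)) /
             (α * ((k : ℝ) * (m : ℝ) - (m : ℝ) ^ 2 - (m : ℝ) * (mh : ℝ))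
                + (m : ℝ) ^ 2 + (m : ℝ) * (mh : ℝ) + (m : ℝ) + (mh : ℝ))) * P (k - 1))
    (hα0 : 0 < α) (hα1 : α < 1) :
    ∀ k : ℕ, mh ≤ k →
      1 - ∑ j ∈ Finset.Ico mh k, P j =
        Real.Gamma (((mh : ℝ) + (m : ℝ) * (1 + (m : ℝ) + (mh : ℝ) - α * (m : ℝ)))
            / ((m : ℝ) * α))
          * Real.Gamma ((k : ℝ) + ((m : ℝ) + (mh : ℝ)) * (1 - α) / α) /
        (Real.Gamma (((mh : ℝ) + (m : ℝ) * (1 - α)) / α)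
          * Real.Gamma (((mh : ℝ) + (m : ℝ) * ((m : ℝ) + (mh : ℝ) + (k : ℝ) * α
              - ((m : ℝ) + (mh : ℝ)) * α + 1)) / ((m : ℝ) * α))) :=
  ccdf_alpha_mid_general m mh hm α P hbase hrec hα0 hα1
end
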